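/- The maximum over x ∈ [0,1] of ∫₀¹ |G_1(x,s)| ds equals 1/24, where G_1(x,s) = (1/6)·s(3x²-6x+s²+2) for 0 ≤ s ≤ x ≤ 1 and G_1(x,s) = (1/6)·(s-1)(3x²-2s+s²) for 0 ≤ x ≤ s ≤ 1. -/

import Mathlib

/-!
Write `g t s = t (1 - s)` for `t ≤ s` and `s (1 - t)` for `s ≤ t` (the Dirichlet Green function
of `-u''`), so that `G₀ x s = ∫₀¹ g x t * g t s dt`. Differentiating in `x` splits
`G1 = G1Pos - G1Neg` with `G1Pos x s = ∫ₓ¹ (1 - t) g t s dt ≥ 0` and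
`G1Neg x s = ∫₀ˣ t g t s dt ≥ 0`, hence `|G1| ≤ G1Pos + G1Neg`. As `∫₀¹ g t s ds = t (1 - t) / 2`,
`∫₀¹ (G1Pos + G1Neg) x s ds = ∫₀ˣ t² (1 - t) / 2 dt + ∫ₓ¹ t (1 - t)² / 2 dt = 1/24 - (x (1 - x))² / 4`.
At `x = 0` the negative part vanishes, so the bound `1/24` is attained.
-/

open Set

noncomputable def G1 (x s : ℝ) : ℝ :=
  if s ≤ x then (1/6) * (s * (3*x^2 - 6*x + s^2 + 2))
  else (1/6) * ((s - 1) * (3*x^2 - 2*s + s^2))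

open intervalIntegral

theorem integral_cubic (a b c₀ c₁ c₂ c₃ : ℝ) :
    ∫ s in a..b, (c₃ * s ^ 3 + c₂ * s ^ 2 + c₁ * s + c₀) =
      c₃ * (b ^ 4 - a ^ 4) / 4 + c₂ * (b ^ 3 - a ^ 3) / 3 + c₁ * (b ^ 2 - a ^ 2) / 2 + c₀ * (b - a) := by
  rw [integral_add, integral_add, integral_add]
  all_goals try (apply Continuous.intervalIntegrable; fun_prop)
  simp only [integral_const_mul, integral_const_mul c₁ fun s => s, integral_pow, integral_id,
    integral_const, smul_eq_mul]
  ring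

section Piecewise

variable {p q : ℝ → ℝ} {x : ℝ}

theorem continuous_ite_le (hp : Continuous p) (hq : Continuous q) (hpq : p x = q x) :
    Continuous fun s => if s ≤ x then p s else q s :=
  hp.if_le hq continuous_id continuous_const fun _ hs => hs ▸ hpq

theorem integral_ite_le (hp : Continuous p) (hq : Continuous q) (hpq : p x = q x) {a b : ℝ}
    (hax : a ≤ x) (hxb : x ≤ b) :
    ∫ s in a..b, (if s ≤ x then p s else q s) = (∫ s in a..x, p s) + ∫ s in x..b, q s := by
  have hf := continuous_ite_le hp hq hpq
  rw [← integral_add_adjacent_intervals (hf.intervalIntegrable a x) (hf.intervalIntegrable x b)]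
  congr 1
  · refine integral_congr fun s hs => if_pos ?_
    exact (uIcc_of_le hax ▸ hs).2
  · refine integral_congr fun s hs => ?_
    rcases (uIcc_of_le hxb ▸ hs).1.eq_or_lt with rfl | hxs
    · exact (if_pos le_rfl).trans hpq
    · exact if_neg hxs.not_ge

end Piecewise

noncomputable def G1Pos (x s : ℝ) : ℝ :=
  if s ≤ x then s * (1 - x) ^ 3 / 3 else (1 - s) * (2 * s - s ^ 2 - 3 * x ^ 2 + 2 * x ^ 3) / 6

noncomputable def G1Neg (x s : ℝ) : ℝ :=
  if s ≤ x then s * (3 * x ^ 2 - 2 * x ^ 3 - s ^ 2) / 6 else (1 - s) * x ^ 3 / 3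

theorem continuous_G1 (x : ℝ) : Continuous (G1 x) :=
  continuous_ite_le (by fun_prop) (by fun_prop) (by ring)

theorem continuous_G1Pos (x : ℝ) : Continuous (G1Pos x) :=
  continuous_ite_le (by fun_prop) (by fun_prop) (by ring)

theorem continuous_G1Neg (x : ℝ) : Continuous (G1Neg x) :=
  continuous_ite_le (by fun_prop) (by fun_prop) (by ring)

theorem G1_eq_G1Pos_sub_G1Neg (x s : ℝ) : G1 x s = G1Pos x s - G1Neg x s := by
  unfold G1 G1Pos G1Neg
  split_ifs <;> ring

section UnitSquare

variable {x s : ℝ}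

theorem G1Pos_nonneg (hx : x ∈ Icc (0 : ℝ) 1) (hs : s ∈ Icc (0 : ℝ) 1) : 0 ≤ G1Pos x s := by
  obtain ⟨hx0, hx1⟩ := hx
  obtain ⟨hs0, hs1⟩ := hs
  unfold G1Pos
  split_ifs with hsx
  · have : 0 ≤ (1 - x) ^ 3 := pow_nonneg (by linarith) 3
    positivity
  · have : 0 ≤ 2 * s - s ^ 2 - 3 * x ^ 2 + 2 * x ^ 3 := by
      nlinarith [mul_nonneg (sub_nonneg.2 (not_le.1 hsx).le) (by linarith : (0 : ℝ) ≤ 2 - s - x),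
        mul_nonneg hx0 (sq_nonneg (1 - x))]
    exact div_nonneg (mul_nonneg (by linarith) this) (by norm_num)

theorem G1Neg_nonneg (hx : x ∈ Icc (0 : ℝ) 1) (hs : s ∈ Icc (0 : ℝ) 1) : 0 ≤ G1Neg x s := by
  obtain ⟨hx0, hx1⟩ := hx
  obtain ⟨hs0, hs1⟩ := hs
  unfold G1Neg
  split_ifs with hsx
  · have : 0 ≤ 3 * x ^ 2 - 2 * x ^ 3 - s ^ 2 := by
      nlinarith [mul_le_mul hsx hsx hs0 hx0, mul_nonneg (sq_nonneg x) (sub_nonneg.2 hx1)]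
    positivity
  · have : 0 ≤ 1 - s := by linarith
    positivity

theorem abs_G1_le (hx : x ∈ Icc (0 : ℝ) 1) (hs : s ∈ Icc (0 : ℝ) 1) :
    |G1 x s| ≤ G1Pos x s + G1Neg x s := by
  rw [G1_eq_G1Pos_sub_G1Neg]
  have := G1Pos_nonneg hx hs
  have := G1Neg_nonneg hx hs
  exact abs_sub_le_iff.2 ⟨by linarith, by linarith⟩

theorem G1Neg_zero_left (hs : 0 ≤ s) : G1Neg 0 s = 0 := by
  unfold G1Neg
  split_ifs with hs0
  · rw [le_antisymm hs0 hs]; ring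
  · ring

end UnitSquare

theorem integral_G1Pos_add_G1Neg {x : ℝ} (hx : x ∈ Icc (0 : ℝ) 1) :
    ∫ s in (0 : ℝ)..1, (G1Pos x s + G1Neg x s) = 1 / 24 - (x * (1 - x)) ^ 2 / 4 := by
  simp only [G1Pos, G1Neg, ite_add_ite]
  rw [integral_ite_le (by fun_prop) (by fun_prop) (by ring) hx.1 hx.2]
  have hl : ∀ s : ℝ, s * (1 - x) ^ 3 / 3 + s * (3 * x ^ 2 - 2 * x ^ 3 - s ^ 2) / 6 =
      (-1 / 6) * s ^ 3 + 0 * s ^ 2 + ((1 - x) ^ 3 / 3 + (3 * x ^ 2 - 2 * x ^ 3) / 6) * s + 0 :=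
    fun s => by ring
  have hr : ∀ s : ℝ, (1 - s) * (2 * s - s ^ 2 - 3 * x ^ 2 + 2 * x ^ 3) / 6 + (1 - s) * x ^ 3 / 3 =
      (1 / 6) * s ^ 3 + (-1 / 2) * s ^ 2 + ((2 + 3 * x ^ 2 - 4 * x ^ 3) / 6) * s +
        (4 * x ^ 3 - 3 * x ^ 2) / 6 :=
    fun s => by ring
  simp only [hl, hr, integral_cubic]
  ring

theorem stmt_2 :
    IsGreatest {y : ℝ | ∃ x ∈ Icc (0:ℝ) 1, y = ∫ s in (0:ℝ)..1, |G1 x s|} (1/24) := by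
  have h0 : (0 : ℝ) ∈ Icc (0 : ℝ) 1 := left_mem_Icc.2 zero_le_one
  refine ⟨⟨0, h0, ?_⟩, ?_⟩
  · have hG1 : EqOn (fun s => |G1 0 s|) (fun s => G1Pos 0 s + G1Neg 0 s) (uIcc 0 1) := by
      intro s hs
      rw [uIcc_of_le zero_le_one] at hs
      dsimp only
      rw [G1_eq_G1Pos_sub_G1Neg, G1Neg_zero_left hs.1, sub_zero, add_zero,
        abs_of_nonneg (G1Pos_nonneg h0 hs)]
    rw [integral_congr hG1, integral_G1Pos_add_G1Neg h0]
    norm_num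
  · rintro y ⟨x, hx, rfl⟩
    calc ∫ s in (0 : ℝ)..1, |G1 x s|
        ≤ ∫ s in (0 : ℝ)..1, (G1Pos x s + G1Neg x s) :=
          integral_mono_on zero_le_one ((continuous_G1 x).abs.intervalIntegrable _ _)
            (((continuous_G1Pos x).add (continuous_G1Neg x)).intervalIntegrable _ _)
            fun s hs => abs_G1_le hx hs
      _ = 1 / 24 - (x * (1 - x)) ^ 2 / 4 := integral_G1Pos_add_G1Neg hx
      _ ≤ 1 / 24 := sub_le_self _ (by positivity)
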